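/- Let v ∈ ℝ^n with Tv ∈ ℤ^n for some T > 0, and let u ∈ C^1(𝒟_R). Define χ = T ∫₀¹ (u − [u]_v)∘X^t_{Tv} · t dt, where X^t_{Tv}(θ,I) = (θ + tTv, I). Then {χ, l_v} = u − [u]_v; that is, v · ∂_θ χ(θ,I) = u(θ,I) − [u]_v(θ,I) for all (θ,I) ∈ 𝒟_R. Moreover, if u ∈ C^i(𝒟_R), then χ ∈ C^i(𝒟_R) with |χ|_i ≤ T |u|_i. -/

import Mathlib

open scoped BigOperators Topology
open Filter Set

namespace NFpaper

/-- Phase space `ℝ^n × ℝ^n`; the first factor is the universal cover of `𝕋^n`. -/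
abbrev Phase (n : ℕ) := (Fin n → ℝ) × (Fin n → ℝ)

/-- The domain `𝒟_R = 𝕋^n × B_R` (described via lifts: no condition on the angles). -/
def Dom (n : ℕ) (R : ℝ) : Set (Phase n) := {p | ‖p.2‖ ≤ R}

/-- Closed ball `B_R` in the action space, for the sup norm. -/
def Ball (n : ℕ) (R : ℝ) : Set (Fin n → ℝ) := {I | ‖I‖ ≤ R}

/-- `f` is the lift of a function on `𝕋^n × ℝ^n`. -/
def PeriodicTheta {n : ℕ} (f : Phase n → ℝ) : Prop :=
  ∀ (m : Fin n → ℤ) (θ I : Fin n → ℝ), f (θ + (fun i => (m i : ℝ)), I) = f (θ, I)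

/-- `f` is the lift of a function on `𝕋^n`. -/
def PeriodicThetaV {n : ℕ} (f : (Fin n → ℝ) → ℝ) : Prop :=
  ∀ (m : Fin n → ℤ) (θ : Fin n → ℝ), f (θ + (fun i => (m i : ℝ))) = f θ

/-- `Φ` is the lift of a map of `𝕋^n × ℝ^n` to itself. -/
def PeriodicMap {n : ℕ} (Φ : Phase n → Phase n) : Prop :=
  ∀ (m : Fin n → ℤ) (θ I : Fin n → ℝ),
    Φ (θ + (fun i => (m i : ℝ)), I) =
      ((Φ (θ, I)).1 + (fun i => (m i : ℝ)), (Φ (θ, I)).2)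

/-- The linear Hamiltonian `l_ω (θ, I) = ω · I`. -/
def lin {n : ℕ} (ω : Fin n → ℝ) : Phase n → ℝ := fun p => ∑ i, ω i * p.2 i

/-- The Hamiltonian flow `X^t_w` of `l_w`. -/
def linFlow {n : ℕ} (w : Fin n → ℝ) (t : ℝ) (x : Phase n) : Phase n := (x.1 + t • w, x.2)

/-- The time average `[g]_w` along the linear flow with frequency `w`. -/
noncomputable def timeAvg {n : ℕ} (w : Fin n → ℝ) (g : Phase n → ℝ) (x : Phase n) : ℝ :=
  limUnder atTop (fun s : ℝ => (1 / s) * ∫ t in (0:ℝ)..s, g (linFlow w t x))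

/-- Iterated averages `[⋯[[g]_{v 0}]_{v 1}⋯]_{v (j-1)}`. -/
noncomputable def iterAvg {n : ℕ} :
    ∀ j : ℕ, (Fin j → (Fin n → ℝ)) → (Phase n → ℝ) → (Phase n → ℝ)
  | 0, _, g => g
  | (j+1), v, g => timeAvg (v (Fin.last j)) (iterAvg j (fun i => v i.castSucc) g)

/-- Poisson bracket, with derivatives taken within `s`. -/
noncomputable def pb {n : ℕ} (s : Set (Phase n)) (f g : Phase n → ℝ) (x : Phase n) : ℝ :=
  ∑ j : Fin n,
    (fderivWithin ℝ f s x ((0 : Fin n → ℝ), (Pi.single j 1 : Fin n → ℝ)) *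
        fderivWithin ℝ g s x ((Pi.single j 1 : Fin n → ℝ), (0 : Fin n → ℝ))
      - fderivWithin ℝ f s x ((Pi.single j 1 : Fin n → ℝ), (0 : Fin n → ℝ)) *
        fderivWithin ℝ g s x ((0 : Fin n → ℝ), (Pi.single j 1 : Fin n → ℝ)))

/-- The canonical symplectic form on `ℝ^n × ℝ^n`. -/
def symp {n : ℕ} (u v : Phase n) : ℝ := ∑ j, (u.2 j * v.1 j - u.1 j * v.2 j)

/-- `Φ` is symplectic on `s`: its differential preserves the canonical symplectic form. -/
def SymplecticOn {n : ℕ} (Φ : Phase n → Phase n) (s : Set (Phase n)) : Prop :=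
  ∀ x ∈ s, ∀ u v : Phase n,
    symp (fderivWithin ℝ Φ s x u) (fderivWithin ℝ Φ s x v) = symp u v

/-- The Hamiltonian vector field `X_H = (∂_I H, -∂_θ H)` (derivatives within `s`). -/
noncomputable def hamVF {n : ℕ} (s : Set (Phase n)) (H : Phase n → ℝ) (x : Phase n) : Phase n :=
  ((fun j => fderivWithin ℝ H s x ((0 : Fin n → ℝ), (Pi.single j 1 : Fin n → ℝ))),
   (fun j => -fderivWithin ℝ H s x ((Pi.single j 1 : Fin n → ℝ), (0 : Fin n → ℝ))))

/-- Vectors with integer components. -/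
def IsIntVec {n : ℕ} (x : Fin n → ℝ) : Prop := ∀ i, ∃ z : ℤ, x i = z

/-- Rational subspaces: subspaces spanned by integer vectors. -/
def IsRationalSub {n : ℕ} (V : Submodule ℝ (Fin n → ℝ)) : Prop :=
  ∃ S : Set (Fin n → ℝ), (∀ v ∈ S, IsIntVec v) ∧ V = Submodule.span ℝ S

/-- `F_ω`: the smallest rational subspace containing `ω`. -/
noncomputable def Fspace {n : ℕ} (ω : Fin n → ℝ) : Submodule ℝ (Fin n → ℝ) :=
  sInf {V | IsRationalSub V ∧ ω ∈ V}

/-- `v` is a `T`-periodic vector. -/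
def IsPeriodic {n : ℕ} (v : Fin n → ℝ) (T : ℝ) : Prop :=
  v ≠ 0 ∧ 0 < T ∧ IsIntVec (T • v) ∧ ∀ t : ℝ, 0 < t → IsIntVec (t • v) → T ≤ t

/-- The constant `Q_ω`. -/
noncomputable def Qmin {n : ℕ} (ω : Fin n → ℝ) : ℝ :=
  sInf {Q : ℝ | ∃ z : Fin n → ℤ, z ≠ 0 ∧ ((fun i => (z i : ℝ)) : Fin n → ℝ) ∈ Fspace ω ∧
    ‖((fun i => (z i : ℝ)) : Fin n → ℝ)‖ ≤ Q}

/-- The function `Ψ_ω`. -/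
noncomputable def Psi {n : ℕ} (ω : Fin n → ℝ) (Q : ℝ) : ℝ :=
  sSup {y : ℝ | ∃ z : Fin n → ℤ, z ≠ 0 ∧ ((fun i => (z i : ℝ)) : Fin n → ℝ) ∈ Fspace ω ∧
    ‖((fun i => (z i : ℝ)) : Fin n → ℝ)‖ ≤ Q ∧ y = |∑ i, (z i : ℝ) * ω i|⁻¹}

/-- The function `Δ_ω`. -/
noncomputable def Delta {n : ℕ} (ω : Fin n → ℝ) (Q : ℝ) : ℝ := Q * Psi ω Q

/-- The function `Δ*_ω`. -/
noncomputable def DeltaStar {n : ℕ} (ω : Fin n → ℝ) (x : ℝ) : ℝ :=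
  sSup {Q : ℝ | Qmin ω ≤ Q ∧ Delta ω Q ≤ x}

/-- The set of Diophantine vectors `Ω_d(γ, τ)`. -/
def Dio {n : ℕ} (d : ℕ) (γ τ : ℝ) (ω : Fin n → ℝ) : Prop :=
  Module.finrank ℝ (Fspace ω) = d ∧ ∀ Q : ℝ, Qmin ω ≤ Q → Psi ω Q ≤ γ⁻¹ * Q ^ τ

/-- The orthogonal projection `Π_F` onto `F = F_ω` for the Euclidean scalar product. -/
noncomputable def projF {n : ℕ} (ω : Fin n → ℝ) (x : Fin n → ℝ) : Fin n → ℝ :=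
  EuclideanSpace.equiv (Fin n) ℝ
    ((Submodule.orthogonalProjection
        ((Fspace ω).map ((EuclideanSpace.equiv (Fin n) ℝ).symm.toLinearEquiv.toLinearMap))
        ((EuclideanSpace.equiv (Fin n) ℝ).symm x) : EuclideanSpace ℝ (Fin n)))

/-- All derivatives of order `≤ k` of `f` are bounded by `M` on `s`. -/
def DerivBoundsOn {E F : Type*} [NormedAddCommGroup E] [NormedSpace ℝ E]
    [NormedAddCommGroup F] [NormedSpace ℝ F]
    (k : ℕ) (f : E → F) (s : Set E) (M : ℝ) : Prop :=
  ∀ i : ℕ, i ≤ k → ∀ x ∈ s, ‖iteratedFDerivWithin ℝ i f s x‖ ≤ M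

/-- `f` is of class `C^k` on `s` with `|f|_{C^k(s)} ≤ M`. -/
def CkNormLE {E F : Type*} [NormedAddCommGroup E] [NormedSpace ℝ E]
    [NormedAddCommGroup F] [NormedSpace ℝ F]
    (k : ℕ) (f : E → F) (s : Set E) (M : ℝ) : Prop :=
  ContDiffOn ℝ k f s ∧ DerivBoundsOn k f s M

/-- The family of directions `(e_{u 0}, 0), …, (0, e_{w (q-1)})` encoding the
partial derivative `∂_θ^{l₁} ∂_I^{l₂}` with `|l₁| = p`, `|l₂| = q`. -/
def mixedDirs (n : ℕ) {p q : ℕ} (u : Fin p → Fin n) (w : Fin q → Fin n) :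
    Fin (p + q) → Phase n :=
  fun i =>
    if h : (i : ℕ) < p then ((Pi.single (u ⟨i, h⟩) 1 : Fin n → ℝ), (0 : Fin n → ℝ))
    else ((0 : Fin n → ℝ),
      (Pi.single (w ⟨(i : ℕ) - p, by have := i.isLt; omega⟩) 1 : Fin n → ℝ))

/-- The gradient `∂_θ S` of a function of the angles. -/
noncomputable def gradV {N : ℕ} (S : (Fin N → ℝ) → ℝ) (θ : Fin N → ℝ) : Fin N → ℝ :=
  fun j => fderiv ℝ S θ (Pi.single j 1)

/-- The splitting matrix `∂²_θ (S⁺ - S⁻) (θ₀)`. -/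
noncomputable def splitMat {N : ℕ} (Sp Sm : (Fin N → ℝ) → ℝ) (θ₀ : Fin N → ℝ) :
    Matrix (Fin N) (Fin N) ℝ :=
  fun i j => fderiv ℝ (fun θ => gradV (fun θ' => Sp θ' - Sm θ') θ j) θ₀ (Pi.single i 1)

end NFpaper
namespace NFpaper

/-- The function `χ = T ∫₀¹ (u - [u]_v) ∘ X^t_{Tv} · t dt`. -/
noncomputable def chi (n : ℕ) (T : ℝ) (v : Fin n → ℝ) (u : Phase n → ℝ)
    (x : Phase n) : ℝ :=
  T * ∫ t in (0:ℝ)..1,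
    (u (linFlow (T • v) t x) - timeAvg v u (linFlow (T • v) t x)) * t


end NFpaper

/-!
Since `T v` is an integer vector, `t ↦ u (x + t (T v, 0))` is `1`-periodic, so the time average
`[u]_v` equals its mean `∫₀¹ u (x + t (T v, 0)) dt` and is constant along the orbit. As
`∫₀¹ t dt = 1/2`, this rewrites `χ` as the weighted line integral
`χ x = ∫₀¹ T (t - 1/2) u (x + t (T v, 0)) dt`.
Derivatives of all orders pass under this integral, at interior points of `𝒟_R` by dominated
convergence and up to the boundary by continuity of the derivative, so `|χ|_i ≤ T |u|_i` because
`|T (t - 1/2)| ≤ T` on `[0, 1]`. Differentiating in the direction `(T v, 0)` and integrating by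
parts in `t` yields `T (u x - ∫₀¹ u (x + t (T v, 0)) dt) = T (u x - [u]_v x)`.
-/

open MeasureTheory
open scoped Interval

theorem Function.Periodic.tendsto_average {E : Type*} [NormedAddCommGroup E] [NormedSpace ℝ E]
    [CompleteSpace E] {g : ℝ → E} {T : ℝ} (hg : Function.Periodic g T) (hT : 0 < T)
    (hint : IntervalIntegrable g volume 0 T) :
    Tendsto (fun s : ℝ => s⁻¹ • ∫ t in (0:ℝ)..s, g t) atTop
      (𝓝 (T⁻¹ • ∫ t in (0:ℝ)..T, g t)) := by
  set A := T⁻¹ • ∫ t in (0:ℝ)..T, g t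
  have hgint : ∀ a b, IntervalIntegrable g volume a b := hg.intervalIntegrable₀ hT.ne' hint
  have hhint : ∀ a b, IntervalIntegrable (fun t => g t - A) volume a b :=
    fun a b => (hgint a b).sub intervalIntegrable_const
  -- the primitive of the zero-mean function `g - A` is periodic, hence bounded
  set H : ℝ → E := fun s => ∫ t in (0:ℝ)..s, (g t - A)
  have hH : Function.Periodic H T := by
    intro s
    have hzero : ∫ t in (0:ℝ)..0 + T, (g t - A) = 0 := by
      rw [zero_add, intervalIntegral.integral_sub (hgint 0 T) intervalIntegrable_const,
        intervalIntegral.integral_const, sub_zero, smul_inv_smul₀ hT.ne', sub_self]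
    have hper : Function.Periodic (fun t => g t - A) T := fun t => by simp only [hg t]
    simp only [H, hper.intervalIntegral_add_eq_add 0 s hhint, hzero, add_zero]
  obtain ⟨C, hC⟩ := isBounded_iff_forall_norm_le.1
    (hH.isBounded_of_continuous hT.ne' (intervalIntegral.continuous_primitive hhint 0))
  have hdecomp : ∀ᶠ s in atTop, s⁻¹ • ∫ t in (0:ℝ)..s, g t = s⁻¹ • H s + A := by
    filter_upwards [eventually_gt_atTop 0] with s hs
    simp only [H]
    rw [intervalIntegral.integral_sub (hgint 0 s) intervalIntegrable_const,
      intervalIntegral.integral_const, sub_zero, smul_sub, inv_smul_smul₀ hs.ne', sub_add_cancel]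
  have hbdd : IsBoundedUnder (· ≤ ·) atTop (norm ∘ H) :=
    isBoundedUnder_of ⟨C, fun s => hC _ (mem_range_self s)⟩
  simpa using ((tendsto_inv_atTop_zero.zero_smul_isBoundedUnder_le hbdd).add_const A).congr'
    (hdecomp.mono fun s hs => hs.symm)

lemma integral_sub_average_mul_id {φ : ℝ → ℝ} (hφ : Continuous φ) :
    ∫ t in (0:ℝ)..1, (φ t - ∫ s in (0:ℝ)..1, φ s) * t = ∫ t in (0:ℝ)..1, (t - 1/2) * φ t := by
  set A := ∫ s in (0:ℝ)..1, φ s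
  calc ∫ t in (0:ℝ)..1, (φ t - A) * t = ∫ t in (0:ℝ)..1, (t * φ t - A * t) := by
        congr 1; ext t; ring
    _ = (∫ t in (0:ℝ)..1, t * φ t) - A / 2 := by
        rw [intervalIntegral.integral_sub (Continuous.intervalIntegrable (by fun_prop) 0 1)
          (Continuous.intervalIntegrable (by fun_prop) 0 1),
          intervalIntegral.integral_const_mul, integral_id]
        ring
    _ = ∫ t in (0:ℝ)..1, (t * φ t - 1/2 * φ t) := by
        rw [intervalIntegral.integral_sub (Continuous.intervalIntegrable (by fun_prop) 0 1)
          (Continuous.intervalIntegrable (by fun_prop) 0 1),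
          intervalIntegral.integral_const_mul]
        ring
    _ = ∫ t in (0:ℝ)..1, (t - 1/2) * φ t := by
        congr 1; ext t; ring

lemma integral_sub_half_mul_deriv {φ φ' : ℝ → ℝ}
    (hφ : ∀ t ∈ uIcc (0:ℝ) 1, HasDerivAt φ (φ' t) t)
    (hφ' : IntervalIntegrable φ' volume 0 1) :
    ∫ t in (0:ℝ)..1, (t - 1/2) * φ' t = (φ 1 + φ 0) / 2 - ∫ t in (0:ℝ)..1, φ t := by
  rw [intervalIntegral.integral_mul_deriv_eq_deriv_mul (u := fun t => t - 1/2)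
    (fun t _ => (hasDerivAt_id' t).sub_const (1/2)) hφ intervalIntegrable_const hφ']
  simp only [one_mul]
  ring

lemma Convex.hasFDerivWithinAt_of_hasFDerivAt_interior {E G : Type*} [NormedAddCommGroup E]
    [NormedSpace ℝ E] [NormedAddCommGroup G] [NormedSpace ℝ G] {s : Set E} (hconv : Convex ℝ s)
    (hclosed : IsClosed s) (hne : (interior s).Nonempty) {f : E → G} {f' : E → E →L[ℝ] G}
    (hf : ContinuousOn f s) (hf' : ContinuousOn f' s)
    (hd : ∀ y ∈ interior s, HasFDerivAt f (f' y) y) {x : E} (hx : x ∈ s) :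
    HasFDerivWithinAt f (f' x) s x := by
  have hcl : closure (interior s) = s := by
    rw [hconv.closure_interior_eq_closure_of_nonempty_interior hne, hclosed.closure_eq]
  have hfderiv : Tendsto (fderiv ℝ f) (𝓝[interior s] x) (𝓝 (f' x)) :=
    ((hf' x hx).mono interior_subset).congr'
      (eventually_nhdsWithin_of_forall fun y hy => ((hd y hy).fderiv).symm)
  rw [← hcl]
  exact hasFDerivWithinAt_closure_of_tendsto_fderiv
    (fun y hy => (hd y hy).differentiableAt.differentiableWithinAt) hconv.interior
    isOpen_interior (fun y hy => (hf y (hcl ▸ hy)).mono interior_subset) hfderiv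

section SegmentIntegral

variable {E G H : Type*} [NormedAddCommGroup E] [NormedSpace ℝ E]
  [NormedAddCommGroup G] [NormedSpace ℝ G] [NormedAddCommGroup H] [NormedSpace ℝ H]

noncomputable def segmentIntegral (c : ℝ → ℝ) (W : E) (g : E → G) (y : E) : G :=
  ∫ t in (0:ℝ)..1, c t • g (y + t • W)

variable {c : ℝ → ℝ} {W : E} {s : Set E}

lemma ContinuousOn.continuous_comp_add_smul {X : Type*} [TopologicalSpace X]
    (hs : ∀ y ∈ s, ∀ t : ℝ, y + t • W ∈ s) {g : E → X} (hg : ContinuousOn g s) {y : E}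
    (hy : y ∈ s) :
    Continuous fun t : ℝ => g (y + t • W) :=
  hg.comp_continuous (by fun_prop) (hs y hy)

lemma segmentIntegral_congr (hs : ∀ y ∈ s, ∀ t : ℝ, y + t • W ∈ s) {g₁ g₂ : E → G}
    (h : EqOn g₁ g₂ s) {y : E} (hy : y ∈ s) :
    segmentIntegral c W g₁ y = segmentIntegral c W g₂ y := by
  simp only [segmentIntegral, h (hs y hy _)]

lemma LinearIsometry.map_segmentIntegral [CompleteSpace G] [CompleteSpace H] (L : G →ₗᵢ[ℝ] H)
    (g : E → G) (y : E) :
    L (segmentIntegral c W g y) = segmentIntegral c W (fun z => L (g z)) y := by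
  simp only [segmentIntegral, ← L.intervalIntegral_comp_comm, map_smul]

lemma norm_segmentIntegral_le {C M : ℝ} {g : E → G} {y : E}
    (hc : ∀ t ∈ Icc (0:ℝ) 1, |c t| ≤ C) (hg : ∀ t ∈ Icc (0:ℝ) 1, ‖g (y + t • W)‖ ≤ M) :
    ‖segmentIntegral c W g y‖ ≤ C * M := by
  have hbound : ∀ t ∈ Ι (0:ℝ) 1, ‖c t • g (y + t • W)‖ ≤ C * M := by
    intro t ht
    have ht' : t ∈ Icc (0:ℝ) 1 := Ioc_subset_Icc_self (by rwa [uIoc_of_le zero_le_one] at ht)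
    rw [norm_smul, Real.norm_eq_abs]
    exact mul_le_mul (hc t ht') (hg t ht') (norm_nonneg _) ((abs_nonneg _).trans (hc t ht'))
  simpa [segmentIntegral] using intervalIntegral.norm_integral_le_of_norm_le_const hbound

lemma segmentIntegral_apply [CompleteSpace G] (hc : Continuous c)
    (hs : ∀ y ∈ s, ∀ t : ℝ, y + t • W ∈ s) {g' : E → E →L[ℝ] G} (hg' : ContinuousOn g' s)
    {y : E} (hy : y ∈ s) (h : E) :
    segmentIntegral c W g' y h = ∫ t in (0:ℝ)..1, c t • g' (y + t • W) h :=
  ContinuousLinearMap.intervalIntegral_apply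
    ((hc.smul (hg'.continuous_comp_add_smul hs hy)).intervalIntegrable 0 1) h

lemma hasDerivAt_comp_add_smul (hs : ∀ y ∈ s, ∀ t : ℝ, y + t • W ∈ s) {g : E → G}
    {g' : E → E →L[ℝ] G} (hg : ∀ y ∈ s, HasFDerivWithinAt g (g' y) s y) {y : E} (hy : y ∈ s)
    (t : ℝ) : HasDerivAt (fun τ : ℝ => g (y + τ • W)) (g' (y + t • W) W) t := by
  have hline : HasDerivAt (fun τ : ℝ => y + τ • W) W t := by
    simpa using ((hasDerivAt_id t).smul_const W).const_add y
  rw [← hasDerivWithinAt_univ]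
  exact (hg _ (hs y hy t)).comp_hasDerivWithinAt t hline.hasDerivWithinAt
    fun τ _ => hs y hy τ

lemma continuousOn_segmentIntegral (hc : Continuous c) (hs : ∀ y ∈ s, ∀ t : ℝ, y + t • W ∈ s)
    {g : E → G} (hg : ContinuousOn g s) : ContinuousOn (segmentIntegral c W g) s := by
  rw [continuousOn_iff_continuous_domRestrict]
  have hcont : Continuous fun p : s × ℝ => c p.2 • g (p.1 + p.2 • W) :=
    (hc.comp continuous_snd).smul
      (hg.comp_continuous (by fun_prop) fun p => hs _ p.1.2 _)
  exact intervalIntegral.continuous_parametric_intervalIntegral_of_continuous'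
    (f := fun (y : s) t => c t • g (y + t • W)) hcont 0 1

lemma add_smul_mem_interior (hs : ∀ y ∈ s, ∀ t : ℝ, y + t • W ∈ s) {y : E}
    (hy : y ∈ interior s) (t : ℝ) : y + t • W ∈ interior s := by
  rw [mem_interior_iff_mem_nhds] at hy ⊢
  have hpre : (· - t • W) ⁻¹' s ∈ 𝓝 (y + t • W) :=
    (continuous_sub_right (t • W)).continuousAt.preimage_mem_nhds (by simpa using hy)
  refine mem_of_superset hpre fun z hz => ?_
  simpa using hs _ hz t

lemma hasFDerivAt_segmentIntegral [ProperSpace E] [CompleteSpace G] (hc : Continuous c)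
    (hs : ∀ y ∈ s, ∀ t : ℝ, y + t • W ∈ s) {g : E → G} {g' : E → E →L[ℝ] G}
    (hg : ∀ y ∈ s, HasFDerivWithinAt g (g' y) s y) (hg' : ContinuousOn g' s) {x : E}
    (hx : x ∈ interior s) :
    HasFDerivAt (segmentIntegral c W g) (segmentIntegral c W g' x) x := by
  have hgc : ContinuousOn g s := fun y hy => (hg y hy).continuousWithinAt
  obtain ⟨r, hr, hball⟩ : ∃ r > 0, Metric.closedBall x r ⊆ interior s :=
    Metric.nhds_basis_closedBall.mem_iff.1 (isOpen_interior.mem_nhds hx)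
  have hballs : Metric.closedBall x r ⊆ s := hball.trans interior_subset
  -- a bound for `g'` on the compact tube `closedBall x r + [0, 1] • W` dominates the integrand
  obtain ⟨C, hC⟩ := ((isCompact_Icc (a := (0:ℝ)) (b := 1)).prod
    (isCompact_closedBall x r)).image (f := fun p : ℝ × E => p.2 + p.1 • W) (by fun_prop)
    |>.exists_bound_of_continuousOn (hg'.mono (by
      rintro _ ⟨⟨t, y⟩, ⟨-, hy⟩, rfl⟩
      exact hs y (hballs hy) t))
  have hxs : x ∈ s := interior_subset hx
  refine hasFDerivAt_integral_of_dominated_of_fderiv_le'' (F := fun y t => c t • g (y + t • W))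
    (F' := fun y t => c t • g' (y + t • W)) (bound := fun t => ‖c t‖ * C)
    (Metric.ball_mem_nhds x hr) ?_ ?_
    (hc.smul (hg'.continuous_comp_add_smul hs hxs)).aestronglyMeasurable ?_
    ((hc.norm.mul continuous_const).intervalIntegrable 0 1) ?_
  · filter_upwards [Metric.ball_mem_nhds x hr] with y hy
    exact (hc.smul (hgc.continuous_comp_add_smul hs
      (hballs (Metric.ball_subset_closedBall hy)))).aestronglyMeasurable
  · exact (hc.smul (hgc.continuous_comp_add_smul hs hxs)).intervalIntegrable 0 1
  · refine ae_restrict_of_forall_mem measurableSet_uIoc fun t ht y hy => ?_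
    have ht' : t ∈ Icc (0:ℝ) 1 := Ioc_subset_Icc_self (by rwa [uIoc_of_le zero_le_one] at ht)
    rw [norm_smul]
    exact mul_le_mul_of_nonneg_left
      (hC _ ⟨(t, y), ⟨ht', Metric.ball_subset_closedBall hy⟩, rfl⟩) (norm_nonneg _)
  · refine Eventually.of_forall fun t y hy => ?_
    have hyt : y + t • W ∈ interior s :=
      add_smul_mem_interior hs (hball (Metric.ball_subset_closedBall hy)) t
    have hgt : HasFDerivAt g (g' (y + t • W)) (y + t • W) :=
      (hg _ (interior_subset hyt)).hasFDerivAt (mem_interior_iff_mem_nhds.1 hyt)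
    exact (hgt.comp y ((hasFDerivAt_id y).add_const (t • W))).const_smul (c t)

lemma hasFDerivWithinAt_segmentIntegral [ProperSpace E] [CompleteSpace G] (hconv : Convex ℝ s)
    (hclosed : IsClosed s) (hne : (interior s).Nonempty) (hc : Continuous c)
    (hs : ∀ y ∈ s, ∀ t : ℝ, y + t • W ∈ s) {g : E → G} {g' : E → E →L[ℝ] G}
    (hg : ∀ y ∈ s, HasFDerivWithinAt g (g' y) s y) (hg' : ContinuousOn g' s) {x : E}
    (hx : x ∈ s) :
    HasFDerivWithinAt (segmentIntegral c W g) (segmentIntegral c W g' x) s x :=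
  hconv.hasFDerivWithinAt_of_hasFDerivAt_interior hclosed hne
    (continuousOn_segmentIntegral hc hs fun y hy => (hg y hy).continuousWithinAt)
    (continuousOn_segmentIntegral hc hs hg')
    (fun _ hy => hasFDerivAt_segmentIntegral hc hs hg hg' hy) hx

theorem HasFTaylorSeriesUpToOn.segmentIntegral [ProperSpace E] [CompleteSpace G]
    (hconv : Convex ℝ s) (hclosed : IsClosed s) (hne : (interior s).Nonempty)
    (hc : Continuous c) (hs : ∀ y ∈ s, ∀ t : ℝ, y + t • W ∈ s) {N : WithTop ℕ∞} {g : E → G}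
    {p : E → FormalMultilinearSeries ℝ E G} (hp : HasFTaylorSeriesUpToOn N g p s) :
    HasFTaylorSeriesUpToOn N (segmentIntegral c W g)
      (fun x m => segmentIntegral c W (p · m) x) s where
  zero_eq x hx := by
    have hmap := (continuousMultilinearCurryFin0 ℝ E G).toLinearIsometry.map_segmentIntegral
      (c := c) (W := W) (fun y => p y 0) x
    exact hmap.trans (segmentIntegral_congr hs (fun y hy => hp.zero_eq y hy) hx)
  fderivWithin m hm x hx := by
    have hcurry := hasFDerivWithinAt_segmentIntegral hconv hclosed hne hc hs
      (fun y hy => hp.fderivWithin m hm y hy)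
      ((continuousMultilinearCurryLeftEquiv ℝ (fun _ : Fin (m + 1) => E) G).continuous
        |>.comp_continuousOn (hp.cont (m + 1) (ENat.add_one_natCast_le_withTop_of_lt hm))) hx
    have hmap := LinearIsometry.map_segmentIntegral (c := c) (W := W)
      (H := E →L[ℝ] ContinuousMultilinearMap ℝ (fun _ : Fin m => E) G)
      (continuousMultilinearCurryLeftEquiv ℝ (fun _ : Fin (m + 1) => E) G).toLinearIsometry
      (fun y => p y (m + 1)) x
    exact hcurry.congr_fderiv hmap.symm
  cont m hm := continuousOn_segmentIntegral hc hs (hp.cont m hm)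

end SegmentIntegral

namespace NFpaper

variable {n : ℕ}

lemma dom_eq_prod (R : ℝ) : Dom n R = univ ×ˢ Metric.closedBall 0 R := by
  ext p
  simp [Dom]

lemma convex_dom (R : ℝ) : Convex ℝ (Dom n R) := by
  rw [dom_eq_prod]
  exact convex_univ.prod (convex_closedBall 0 R)

lemma isClosed_dom (R : ℝ) : IsClosed (Dom n R) := by
  rw [dom_eq_prod]
  exact isClosed_univ.prod Metric.isClosed_closedBall

lemma interior_dom_nonempty {R : ℝ} (hR : 0 < R) : (interior (Dom n R)).Nonempty := by
  rw [dom_eq_prod, interior_prod_eq, interior_univ, interior_closedBall _ hR.ne']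
  exact ⟨0, mem_univ _, Metric.mem_ball_self hR⟩

lemma uniqueDiffOn_dom {R : ℝ} (hR : 0 < R) : UniqueDiffOn ℝ (Dom n R) :=
  uniqueDiffOn_convex (convex_dom R) (interior_dom_nonempty hR)

lemma add_smul_mem_dom {R : ℝ} {x : Phase n} (hx : x ∈ Dom n R) (a : Fin n → ℝ) (t : ℝ) :
    x + t • ((a, 0) : Phase n) ∈ Dom n R := by
  simpa [Dom] using hx

lemma linFlow_eq_add (w : Fin n → ℝ) (t : ℝ) (x : Phase n) :
    linFlow w t x = x + t • ((w, 0) : Phase n) := by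
  ext <;> simp [linFlow]

lemma PeriodicTheta.periodic_linFlow {u : Phase n → ℝ} (hu : PeriodicTheta u) {T : ℝ}
    {v : Fin n → ℝ} (hTv : IsIntVec (T • v)) (x : Phase n) :
    Function.Periodic (fun t => u (linFlow v t x)) T := by
  choose m hm using hTv
  intro t
  have hshift : linFlow v (t + T) x = ((linFlow v t x).1 + fun i => (m i : ℝ), x.2) := by
    ext i <;> simp [linFlow, add_smul, ← hm i, add_assoc]
  simp only [hshift, hu m]
  rfl

lemma timeAvg_eq_of_periodic {u : Phase n → ℝ} {v : Fin n → ℝ} {x : Phase n} {T : ℝ}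
    (hT : 0 < T) (hper : Function.Periodic (fun t => u (linFlow v t x)) T)
    (hint : IntervalIntegrable (fun t => u (linFlow v t x)) volume 0 T) :
    timeAvg v u x = T⁻¹ * ∫ t in (0:ℝ)..T, u (linFlow v t x) := by
  have h := hper.tendsto_average hT hint
  simp only [smul_eq_mul] at h
  simpa only [timeAvg, one_div] using h.limUnder_eq

lemma linFlow_smul (T : ℝ) (v : Fin n → ℝ) (t : ℝ) (x : Phase n) :
    linFlow (T • v) t x = linFlow v (T * t) x := by
  ext i <;> simp [linFlow]; ring

lemma timeAvg_linFlow_eq_integral {u : Phase n → ℝ} (hu : PeriodicTheta u) {T : ℝ} (hT : 0 < T)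
    {v : Fin n → ℝ} (hTv : IsIntVec (T • v)) {x : Phase n}
    (hcont : Continuous fun t => u (linFlow v t x)) (s : ℝ) :
    timeAvg v u (linFlow (T • v) s x) = ∫ t in (0:ℝ)..1, u (linFlow (T • v) t x) := by
  set ψ := fun t => u (linFlow v t x)
  have hshift : ∀ τ, linFlow v τ (linFlow (T • v) s x) = linFlow v (τ + T * s) x := by
    intro τ
    ext i <;> simp [linFlow]; ring
  have hcont' : Continuous fun τ => u (linFlow v τ (linFlow (T • v) s x)) := by
    simp only [hshift]
    exact hcont.comp (continuous_add_const _)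
  rw [timeAvg_eq_of_periodic hT (hu.periodic_linFlow hTv _) (hcont'.intervalIntegrable 0 T)]
  simp only [hshift]
  simp only [linFlow_smul]
  rw [intervalIntegral.integral_comp_add_right ψ, zero_add, add_comm,
    (hu.periodic_linFlow hTv x).intervalIntegral_add_eq (T * s) 0, zero_add,
    intervalIntegral.integral_comp_mul_left ψ hT.ne', mul_zero, mul_one, smul_eq_mul]

lemma continuous_comp_linFlow {R : ℝ} {u : Phase n → ℝ} (hu : ContinuousOn u (Dom n R))
    (v : Fin n → ℝ) {x : Phase n} (hx : x ∈ Dom n R) :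
    Continuous fun t => u (linFlow v t x) := by
  simpa only [linFlow_eq_add] using
    hu.continuous_comp_add_smul (fun y hy t => add_smul_mem_dom hy v t) hx

lemma chi_eq_segmentIntegral {u : Phase n → ℝ} (hu : PeriodicTheta u) {T : ℝ} (hT : 0 < T)
    {v : Fin n → ℝ} (hTv : IsIntVec (T • v)) {x : Phase n}
    (hcont : Continuous fun t => u (linFlow v t x)) :
    chi n T v u x = segmentIntegral (fun t => T * (t - 1/2)) ((T • v, 0) : Phase n) u x := by
  have hφ : Continuous fun t => u (linFlow (T • v) t x) := by
    simp only [linFlow_smul]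
    exact hcont.comp (continuous_const_mul T)
  simp only [chi, timeAvg_linFlow_eq_integral hu hT hTv hcont,
    integral_sub_average_mul_id hφ, segmentIntegral, ← linFlow_eq_add, smul_eq_mul,
    ← intervalIntegral.integral_const_mul, mul_assoc]

lemma sum_mul_apply_single (L : Phase n →L[ℝ] ℝ) (v : Fin n → ℝ) :
    ∑ j, v j * L ((Pi.single j 1 : Fin n → ℝ), (0 : Fin n → ℝ)) = L (v, 0) := by
  have hv : ((v, 0) : Phase n) = ∑ j, v j • (((Pi.single j 1 : Fin n → ℝ), 0) : Phase n) := by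
    ext i <;> simp [Prod.fst_sum, Prod.snd_sum, Finset.sum_apply, Pi.single_apply]
  rw [hv, map_sum]
  simp only [map_smul, smul_eq_mul]

lemma eqOn_chi_segmentIntegral {R : ℝ} {u : Phase n → ℝ} (hu : PeriodicTheta u)
    (huc : ContinuousOn u (Dom n R)) {T : ℝ} (hT : 0 < T) {v : Fin n → ℝ}
    (hTv : IsIntVec (T • v)) :
    EqOn (chi n T v u) (segmentIntegral (fun t => T * (t - 1/2)) ((T • v, 0) : Phase n) u)
      (Dom n R) :=
  fun _ hy => chi_eq_segmentIntegral hu hT hTv (continuous_comp_linFlow huc v hy)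

lemma hasFTaylorSeriesUpToOn_chi {R : ℝ} (hR : 0 < R) {u : Phase n → ℝ} (hu : PeriodicTheta u)
    {T : ℝ} (hT : 0 < T) {v : Fin n → ℝ} (hTv : IsIntVec (T • v)) {N : ℕ}
    (huN : ContDiffOn ℝ N u (Dom n R)) :
    HasFTaylorSeriesUpToOn N (chi n T v u)
      (fun x m => segmentIntegral (fun t => T * (t - 1/2)) ((T • v, 0) : Phase n)
        (iteratedFDerivWithin ℝ m u (Dom n R)) x) (Dom n R) :=
  ((huN.ftaylorSeriesWithin (uniqueDiffOn_dom hR)).segmentIntegral (convex_dom R)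
    (isClosed_dom R) (interior_dom_nonempty hR) (by fun_prop)
    (fun y hy t => add_smul_mem_dom hy _ t)).congr
    (eqOn_chi_segmentIntegral hu huN.continuousOn hT hTv)

lemma fderivWithin_chi_apply {R : ℝ} (hR : 0 < R) {u : Phase n → ℝ} (hu : PeriodicTheta u)
    (hu1 : ContDiffOn ℝ 1 u (Dom n R)) {T : ℝ} (hT : 0 < T) {v : Fin n → ℝ}
    (hTv : IsIntVec (T • v)) {x : Phase n} (hx : x ∈ Dom n R) :
    fderivWithin ℝ (chi n T v u) (Dom n R) x (v, 0) = u x - timeAvg v u x := by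
  set W : Phase n := (T • v, 0)
  have hs : ∀ y ∈ Dom n R, ∀ t : ℝ, y + t • W ∈ Dom n R := fun y hy t => add_smul_mem_dom hy _ t
  have hc : Continuous fun t : ℝ => T * (t - 1/2) := by fun_prop
  have hg : ∀ y ∈ Dom n R, HasFDerivWithinAt u (fderivWithin ℝ u (Dom n R) y) (Dom n R) y :=
    fun y hy => (hu1.differentiableOn one_ne_zero y hy).hasFDerivWithinAt
  have hg' : ContinuousOn (fderivWithin ℝ u (Dom n R)) (Dom n R) :=
    hu1.continuousOn_fderivWithin (uniqueDiffOn_dom hR) le_rfl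
  have hchi := eqOn_chi_segmentIntegral hu hu1.continuousOn hT hTv
  have hderiv := (hasFDerivWithinAt_segmentIntegral (convex_dom R) (isClosed_dom R)
    (interior_dom_nonempty hR) hc hs hg hg' hx).congr hchi (hchi hx)
  have hperiod : u (x + (1:ℝ) • W) = u x := by
    have h := hu.periodic_linFlow (T := 1) (v := T • v) (by simpa) x 0
    simpa only [linFlow_eq_add, zero_add, zero_smul, add_zero] using h
  have havg : ∫ t in (0:ℝ)..1, u (x + t • W) = timeAvg v u x := by
    have h := timeAvg_linFlow_eq_integral hu hT hTv
      (continuous_comp_linFlow hu1.continuousOn v hx) 0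
    simp only [linFlow_eq_add, zero_smul, add_zero] at h
    exact h.symm
  have hW : W = T • ((v, 0) : Phase n) := by ext <;> simp [W]
  have key : T * fderivWithin ℝ (chi n T v u) (Dom n R) x (v, 0) = T * (u x - timeAvg v u x) := by
    rw [← smul_eq_mul, ← map_smul, ← hW, hderiv.fderivWithin (uniqueDiffOn_dom hR x hx),
      segmentIntegral_apply hc hs hg' hx]
    simp only [smul_eq_mul, mul_assoc]
    rw [intervalIntegral.integral_const_mul, integral_sub_half_mul_deriv
      (fun t _ => hasDerivAt_comp_add_smul hs hg hx t) ?_, hperiod, zero_smul, add_zero, havg]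
    · ring
    · exact (hg'.continuous_comp_add_smul hs hx |>.clm_apply continuous_const)
        |>.intervalIntegrable 0 1
  exact mul_left_cancel₀ hT.ne' key

theorem chi_identity_general
    (n : ℕ) (R : ℝ) (hR : 0 < R)
    (v : Fin n → ℝ) (T : ℝ) (hT : 0 < T) (hTv : IsIntVec (T • v))
    (u : Phase n → ℝ) (hu : PeriodicTheta u) (hu1 : ContDiffOn ℝ 1 u (Dom n R)) :
    (∀ x ∈ Dom n R,
      ∑ j, v j * fderivWithin ℝ (chi n T v u) (Dom n R) x
        ((Pi.single j 1 : Fin n → ℝ), (0 : Fin n → ℝ)) = u x - timeAvg v u x) ∧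
    ∀ (i : ℕ) (M : ℝ), 1 ≤ i → 0 ≤ M →
      ContDiffOn ℝ i u (Dom n R) → DerivBoundsOn i u (Dom n R) M →
      ContDiffOn ℝ i (chi n T v u) (Dom n R) ∧
        DerivBoundsOn i (chi n T v u) (Dom n R) (T * M) := by
  refine ⟨fun x hx => ?_, fun i M _ _ hui hbound => ?_⟩
  · rw [sum_mul_apply_single]
    exact fderivWithin_chi_apply hR hu hu1 hT hTv hx
  · have hp := hasFTaylorSeriesUpToOn_chi hR hu hT hTv hui
    refine ⟨hp.contDiffOn, fun m hm x hx => ?_⟩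
    rw [← hp.eq_iteratedFDerivWithin_of_uniqueDiffOn (by exact_mod_cast hm)
      (uniqueDiffOn_dom hR) hx]
    refine norm_segmentIntegral_le (fun t ht => ?_)
      (fun t _ => hbound m hm _ (add_smul_mem_dom hx _ t))
    rw [abs_le]
    constructor <;> nlinarith [ht.1, ht.2]

/-- **The key identity `{χ, l_v} = u - [u]_v` and the estimate `|χ|_i ≤ T |u|_i`.** -/
theorem chi_identity
    (n : ℕ) (hn : 2 ≤ n) (R : ℝ) (hR : 0 < R)
    (v : Fin n → ℝ) (T : ℝ) (hT : 0 < T) (hTv : IsIntVec (T • v))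
    (u : Phase n → ℝ) (hu : PeriodicTheta u) (hu1 : ContDiffOn ℝ 1 u (Dom n R)) :
    (∀ x ∈ Dom n R,
      ∑ j, v j * fderivWithin ℝ (chi n T v u) (Dom n R) x
        ((Pi.single j 1 : Fin n → ℝ), (0 : Fin n → ℝ)) = u x - timeAvg v u x) ∧
    ∀ (i : ℕ) (M : ℝ), 1 ≤ i → 0 ≤ M →
      ContDiffOn ℝ i u (Dom n R) → DerivBoundsOn i u (Dom n R) M →
      ContDiffOn ℝ i (chi n T v u) (Dom n R) ∧
        DerivBoundsOn i (chi n T v u) (Dom n R) (T * M) :=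
  chi_identity_general n R hR v T hT hTv u hu hu1

end NFpaper
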